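/- Let n be even, λ ∈ F with λ² = −1, char F ≠ 2, H = {±1} ≤ GL₁(F), and let K ≤ S_n be transitive preserving the partition {{1,2},…,{n−1,n}}. Then F^n = ⟨e₁+λe₂⟩ ⊕ ⟨e₁−λe₂⟩ ⊕ ⋯ ⊕ ⟨e_{n−1}+λe_n⟩ ⊕ ⟨e_{n−1}−λe_n⟩ is a system of imprimitivity for G = H ≀ K. -/

import Mathlib

/-- The element of `GL(ι → W)` acting as `h` on coordinate `i` and trivially elsewhere. -/
noncomputable def blockGL (F : Type*) [Field F] {ι : Type*} [DecidableEq ι] {W : Type*}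
    [AddCommGroup W] [Module F W] (i : ι) (h : LinearMap.GeneralLinearGroup F W) :
    LinearMap.GeneralLinearGroup F (ι → W) :=
  (LinearMap.GeneralLinearGroup.generalLinearEquiv F (ι → W)).symm
    (LinearEquiv.piCongrRight fun j =>
      if j = i then LinearMap.GeneralLinearGroup.generalLinearEquiv F W h
      else LinearEquiv.refl F W)

/-- The element of `GL(ι → W)` permuting the coordinates according to `π`. -/
noncomputable def permGL (F : Type*) [Field F] {ι : Type*} {W : Type*}
    [AddCommGroup W] [Module F W] (π : Equiv.Perm ι) :
    LinearMap.GeneralLinearGroup F (ι → W) :=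
  (LinearMap.GeneralLinearGroup.generalLinearEquiv F (ι → W)).symm
    (LinearEquiv.piCongrLeft' F (fun _ => W) π)

/-- The wreath product `H ≀ K` as a subgroup of `GL(ι → W)`. -/
noncomputable def wreath (F : Type*) [Field F] {ι : Type*} [DecidableEq ι] {W : Type*}
    [AddCommGroup W] [Module F W] (H : Subgroup (LinearMap.GeneralLinearGroup F W))
    (K : Subgroup (Equiv.Perm ι)) : Subgroup (LinearMap.GeneralLinearGroup F (ι → W)) :=
  Subgroup.closure ({g | ∃ i h, h ∈ H ∧ g = blockGL F i h} ∪ {g | ∃ π ∈ K, g = permGL F π})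

/-- `G` permutes the family `Z` of subspaces. -/
def Permutes (F : Type*) [Field F] {V : Type*} [AddCommGroup V] [Module F V]
    (G : Subgroup (LinearMap.GeneralLinearGroup F V)) {ι : Type*}
    (Z : ι → Submodule F V) : Prop :=
  ∀ g ∈ G, ∀ t, (Z t).map ((g : (V →ₗ[F] V)ˣ) : V →ₗ[F] V) ∈ Set.range Z

/-- `Z` is a decomposition of `V` into nonzero subspaces permuted by `G`; together with the
requirement that the index type has more than one element, this is a system of imprimitivity. -/
def IsSystemOfImprimitivity (F : Type*) [Field F] {V : Type*} [AddCommGroup V] [Module F V]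
    (G : Subgroup (LinearMap.GeneralLinearGroup F V)) {ι : Type*} [DecidableEq ι]
    (Z : ι → Submodule F V) : Prop :=
  (∀ t, Z t ≠ ⊥) ∧ DirectSum.IsInternal Z ∧ Permutes F G Z

/-- `G` acts irreducibly on `V`. -/
def IrreducibleOn (F : Type*) [Field F] {V : Type*} [AddCommGroup V] [Module F V]
    (G : Subgroup (LinearMap.GeneralLinearGroup F V)) : Prop :=
  ∀ U : Submodule F V, (∀ g ∈ G, U.map ((g : (V →ₗ[F] V)ˣ) : V →ₗ[F] V) ≤ U) → U = ⊥ ∨ U = ⊤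

/-- `G` acts primitively on `V`: there is no system of imprimitivity. -/
def PrimitiveOn (F : Type*) [Field F] {V : Type*} [AddCommGroup V] [Module F V]
    (G : Subgroup (LinearMap.GeneralLinearGroup F V)) : Prop :=
  ¬ ∃ (ℓ : ℕ) (Z : Fin ℓ → Submodule F V), 1 < ℓ ∧ IsSystemOfImprimitivity F G Z

/-- The element `-1` of `GL₁(F) = GL(F)`. -/
noncomputable def negGL (F : Type*) [Field F] : LinearMap.GeneralLinearGroup F F :=
  ⟨-LinearMap.id, -LinearMap.id, by ext; simp [Module.End.mul_apply], by ext; simp [Module.End.mul_apply]⟩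

/-- The standard basis vector `eᵢ` of `F^n`. -/
def stdVec (F : Type*) [Field F] (n : ℕ) (i : Fin n) : Fin n → F := Pi.single i 1

/-!
Write `v_{t,±} = e_{2t} ± λ e_{2t+1}`. Since `2 ≠ 0` and `λ ≠ 0`, the `e_i` are combinations of
the `v_{t,±}`, so these `2m` vectors form a basis. A sign change in coordinate `2t` or `2t+1`
maps `v_{t,±}` to `-v_{t,∓}` resp. `v_{t,∓}` and fixes the other lines; a permutation in `K`
carries `{2t, 2t+1}` onto some `{2t', 2t'+1}`, and if it reverses the order it sends `v_{t,s}`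
to `e_{2t'+1} + c e_{2t'} = c v_{t',-s}` for `c = ±λ`, because `c⁻¹ = -c`. Hence the generators
of `H ≀ K`, which form a set closed under inverses, permute the lines `⟨v_{t,±}⟩`, and so does
the whole group.
-/

section GeneralLinear

variable {F : Type*} [Field F] {ι : Type*} {W : Type*} [AddCommGroup W] [Module F W]

theorem blockGL_apply [DecidableEq ι] (i : ι) (h : LinearMap.GeneralLinearGroup F W)
    (x : ι → W) (j : ι) :
    (blockGL F i h).val x j = if j = i then h.val (x j) else x j := by
  change (LinearEquiv.piCongrRight _) x j = _
  rw [LinearEquiv.piCongrRight_apply]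
  split <;> rfl

theorem permGL_apply (π : Equiv.Perm ι) (x : ι → W) (j : ι) :
    (permGL F π (W := W)).val x j = x (π.symm j) := rfl

theorem blockGL_mul [DecidableEq ι] (i : ι) (h k : LinearMap.GeneralLinearGroup F W) :
    blockGL F i (h * k) = blockGL F i h * blockGL F i k := by
  ext x j
  simp only [Units.val_mul, Module.End.mul_apply, blockGL_apply]
  split <;> rfl

theorem blockGL_one [DecidableEq ι] (i : ι) :
    blockGL F i (1 : LinearMap.GeneralLinearGroup F W) = 1 := by
  ext x j
  rw [blockGL_apply]
  split <;> rfl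

theorem blockGL_inv [DecidableEq ι] (i : ι) (h : LinearMap.GeneralLinearGroup F W) :
    (blockGL F i h)⁻¹ = blockGL F i h⁻¹ :=
  (eq_inv_of_mul_eq_one_left (by rw [← blockGL_mul, inv_mul_cancel, blockGL_one])).symm

theorem permGL_inv (π : Equiv.Perm ι) : (permGL F π (W := W))⁻¹ = permGL F π⁻¹ := by
  refine (eq_inv_of_mul_eq_one_left ?_).symm
  ext x j
  simp [permGL_apply, Module.End.mul_apply, Equiv.Perm.inv_def]

theorem negGL_mul_self : negGL F * negGL F = 1 := by
  ext
  simp [negGL, Module.End.mul_apply]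

theorem mem_closure_negGL {h : LinearMap.GeneralLinearGroup F F}
    (hh : h ∈ Subgroup.closure {negGL F}) : h = 1 ∨ h = negGL F := by
  obtain ⟨k, rfl⟩ := Subgroup.mem_closure_singleton.1 hh
  have hsq : negGL F ^ (2 : ℤ) = 1 := by rw [zpow_two, negGL_mul_self]
  rw [zpow_eq_zpow_emod k hsq]
  rcases Int.emod_two_eq_zero_or_one k with h0 | h1
  · left; rw [h0, zpow_zero]
  · right; rw [h1, zpow_one]

end GeneralLinear

section Lines

open Submodule

variable {F : Type*} [Field F] {V : Type*} [AddCommGroup V] [Module F V] {ι : Type*}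

theorem permutes_closure_of_inv_subset {S : Set (LinearMap.GeneralLinearGroup F V)}
    {Z : ι → Submodule F V} (hS : S⁻¹ ⊆ S)
    (hZ : ∀ g ∈ S, ∀ t, (Z t).map g.val ∈ Set.range Z) :
    Permutes F (Subgroup.closure S) Z := by
  intro g hg
  rw [← Subgroup.mem_toSubmonoid, Subgroup.closure_toSubmonoid, Set.union_eq_left.2 hS] at hg
  induction hg using Submonoid.closure_induction with
  | mem g hg => exact hZ g hg
  | one => exact fun t => ⟨t, by rw [Units.val_one, Module.End.one_eq_id, map_id]⟩
  | mul g g' _ _ ihg ihg' =>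
    intro t
    obtain ⟨t', ht'⟩ := ihg' t
    rw [Units.val_mul, Module.End.mul_eq_comp, map_comp, ← ht']
    exact ihg t'

theorem permutes_wreath {W : Type*} [AddCommGroup W] [Module F W] [DecidableEq ι]
    {H : Subgroup (LinearMap.GeneralLinearGroup F W)} {K : Subgroup (Equiv.Perm ι)}
    {κ : Type*} {Z : κ → Submodule F (ι → W)}
    (hblock : ∀ i, ∀ h ∈ H, ∀ t, (Z t).map (blockGL F i h).val ∈ Set.range Z)
    (hperm : ∀ π ∈ K, ∀ t, (Z t).map (permGL F π).val ∈ Set.range Z) :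
    Permutes F (wreath F H K) Z := by
  refine permutes_closure_of_inv_subset ?_ ?_
  · rintro g (⟨i, h, hh, hg⟩ | ⟨π, hπ, hg⟩)
    · exact .inl ⟨i, h⁻¹, inv_mem hh, by rw [← blockGL_inv, ← hg, inv_inv]⟩
    · exact .inr ⟨π⁻¹, inv_mem hπ, by rw [← permGL_inv, ← hg, inv_inv]⟩
  · rintro g (⟨i, h, hh, rfl⟩ | ⟨π, hπ, rfl⟩)
    · exact hblock i h hh
    · exact hperm π hπ

theorem map_span_singleton_mem_range {v : ι → V} (f : V →ₗ[F] V) {p q : ι} {c : F}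
    (hc : c ≠ 0) (hf : f (v p) = c • v q) :
    (span F {v p}).map f ∈ Set.range fun t => span F {v t} :=
  ⟨q, by rw [map_span, Set.image_singleton, hf, span_singleton_smul_eq hc.isUnit]⟩

theorem Submodule.mem_and_mem_of_add_smul_mem {U : Submodule F V} {x y : V} {c : F}
    (h2 : (2 : F) ≠ 0) (hc : c ≠ 0)
    (hplus : x + c • y ∈ U) (hminus : x + (-c) • y ∈ U) : x ∈ U ∧ y ∈ U := by
  refine ⟨(U.smul_mem_iff h2).1 ?_, (U.smul_mem_iff (mul_ne_zero h2 hc)).1 ?_⟩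
  · convert add_mem hplus hminus using 1; module
  · convert sub_mem hplus hminus using 1; module

theorem isSystemOfImprimitivity_span_singleton [Fintype ι] [DecidableEq ι]
    [FiniteDimensional F V] {G : Subgroup (LinearMap.GeneralLinearGroup F V)} {v : ι → V}
    (hspan : span F (Set.range v) = ⊤) (hcard : Fintype.card ι = Module.finrank F V)
    (hG : Permutes F G fun t => span F {v t}) :
    IsSystemOfImprimitivity F G fun t => span F {v t} := by
  have hli : LinearIndependent F v :=
    linearIndependent_of_top_le_span_of_card_eq_finrank hspan.ge hcard
  refine ⟨fun t => by simpa using hli.ne_zero t, ?_, hG⟩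
  rw [DirectSum.isInternal_submodule_iff_iSupIndep_and_iSup_eq_top, ← span_range_eq_iSup]
  exact ⟨hli.iSupIndep_span_singleton, hspan⟩

end Lines

section SignedPairs

open Submodule

variable {F : Type*} [Field F] {m : ℕ}

theorem two_mul_val_lt (t : Fin m) : 2 * t.val < 2 * m := by omega

theorem two_mul_val_add_one_lt (t : Fin m) : 2 * t.val + 1 < 2 * m := by omega

def pairFst (t : Fin m) : Fin (2 * m) := ⟨2 * t.val, two_mul_val_lt t⟩

def pairSnd (t : Fin m) : Fin (2 * m) := ⟨2 * t.val + 1, two_mul_val_add_one_lt t⟩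

theorem pairFst_ne_pairSnd (t t' : Fin m) : pairFst t ≠ pairSnd t' := by
  simp only [pairFst, pairSnd, ne_eq, Fin.ext_iff]
  omega

theorem exists_eq_pairFst_or_eq_pairSnd (i : Fin (2 * m)) :
    ∃ t, i = pairFst t ∨ i = pairSnd t :=
  ⟨⟨i / 2, by omega⟩, by simp only [pairFst, pairSnd, Fin.ext_iff]; omega⟩

def signedLam (lam : F) (s : Bool) : F := if s then -lam else lam

theorem signedLam_not (lam : F) (s : Bool) : signedLam lam (!s) = -signedLam lam s := by
  cases s <;> simp [signedLam]

theorem signedLam_mul_signedLam_not {lam : F} (hlam : lam ^ 2 = -1) (s : Bool) :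
    signedLam lam s * signedLam lam (!s) = 1 := by
  cases s <;>
    simp only [signedLam, Bool.false_eq_true, ↓reduceIte, Bool.not_false, Bool.not_true, mul_neg,
      neg_mul] <;>
    linear_combination -hlam

theorem signedLam_ne_zero {lam : F} (hlam : lam ^ 2 = -1) (s : Bool) : signedLam lam s ≠ 0 :=
  left_ne_zero_of_mul_eq_one (signedLam_mul_signedLam_not hlam s)

def pairVec (lam : F) (p : Fin m × Bool) : Fin (2 * m) → F :=
  stdVec F (2 * m) (pairFst p.1) + signedLam lam p.2 • stdVec F (2 * m) (pairSnd p.1)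

theorem span_range_pairVec (h2 : (2 : F) ≠ 0) {lam : F} (hlam : lam ^ 2 = -1) :
    span F (Set.range (pairVec (m := m) lam)) = ⊤ := by
  rw [eq_top_iff, ← (Pi.basisFun F (Fin (2 * m))).span_eq, span_le, Set.range_subset_iff]
  intro i
  obtain ⟨t, hi⟩ := exists_eq_pairFst_or_eq_pairSnd i
  have hmem := Submodule.mem_and_mem_of_add_smul_mem
    (U := span F (Set.range (pairVec lam))) h2 (signedLam_ne_zero hlam false)
    (subset_span ⟨(t, false), rfl⟩) (subset_span ⟨(t, true), rfl⟩)
  rw [Pi.basisFun_apply]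
  rcases hi with rfl | rfl
  · exact hmem.1
  · exact hmem.2

theorem permGL_stdVec {n : ℕ} (π : Equiv.Perm (Fin n)) (k : Fin n) :
    (permGL F π (W := F)).val (stdVec F n k) = stdVec F n (π k) := by
  ext j
  simp [permGL_apply, stdVec, Pi.single_apply, Equiv.symm_apply_eq]

theorem blockGL_negGL_stdVec {n : ℕ} (i k : Fin n) :
    (blockGL F i (negGL F)).val (stdVec F n k) =
      if k = i then -stdVec F n k else stdVec F n k := by
  ext j
  rw [blockGL_apply]
  by_cases hji : j = i
  · subst hji
    by_cases hkj : k = j <;> simp [hkj, stdVec, negGL]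
  · by_cases hki : k = i <;> simp [hji, hki, stdVec]

theorem blockGL_negGL_pairVec (lam : F) (i : Fin (2 * m)) (p : Fin m × Bool) :
    ∃ q, ∃ c ≠ (0 : F), (blockGL F i (negGL F)).val (pairVec lam p) = c • pairVec lam q := by
  obtain ⟨t, s⟩ := p
  by_cases hfst : pairFst t = i
  · have hsnd : pairSnd t ≠ i := hfst ▸ (pairFst_ne_pairSnd t t).symm
    refine ⟨(t, !s), -1, by norm_num, ?_⟩
    simp only [pairVec, map_add, map_smul, blockGL_negGL_stdVec, if_pos hfst, if_neg hsnd,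
      signedLam_not]
    module
  by_cases hsnd : pairSnd t = i
  · refine ⟨(t, !s), 1, one_ne_zero, ?_⟩
    simp only [pairVec, map_add, map_smul, blockGL_negGL_stdVec, if_neg hfst, if_pos hsnd,
      signedLam_not]
    module
  · refine ⟨(t, s), 1, one_ne_zero, ?_⟩
    simp only [pairVec, map_add, map_smul, blockGL_negGL_stdVec, if_neg hfst, if_neg hsnd,
      one_smul]

theorem permGL_pairVec {lam : F} (hlam : lam ^ 2 = -1) {π : Equiv.Perm (Fin (2 * m))}
    (hπ : ∀ t : Fin m, ∃ t' : Fin m,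
      ({π (pairFst t), π (pairSnd t)} : Set (Fin (2 * m))) = {pairFst t', pairSnd t'})
    (p : Fin m × Bool) :
    ∃ q, ∃ c ≠ (0 : F), (permGL F π).val (pairVec lam p) = c • pairVec lam q := by
  obtain ⟨t, s⟩ := p
  obtain ⟨t', ht'⟩ := hπ t
  rcases Set.pair_eq_pair_iff.1 ht' with ⟨hfst, hsnd⟩ | ⟨hfst, hsnd⟩
  · refine ⟨(t', s), 1, one_ne_zero, ?_⟩
    simp only [pairVec, map_add, map_smul, permGL_stdVec, hfst, hsnd, one_smul]
  · -- the pair is reversed; rescale by `signedLam lam s`, whose inverse is `signedLam lam (!s)`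
    refine ⟨(t', !s), signedLam lam s, signedLam_ne_zero hlam s, ?_⟩
    simp only [pairVec, map_add, map_smul, permGL_stdVec, hfst, hsnd]
    rw [smul_add, smul_smul, signedLam_mul_signedLam_not hlam, one_smul, add_comm]

theorem permutes_signWreath_pairVec {lam : F} (hlam : lam ^ 2 = -1)
    {K : Subgroup (Equiv.Perm (Fin (2 * m)))}
    (hK : ∀ π ∈ K, ∀ t : Fin m, ∃ t' : Fin m,
      ({π (pairFst t), π (pairSnd t)} : Set (Fin (2 * m))) = {pairFst t', pairSnd t'}) :
    Permutes F (wreath F (Subgroup.closure {negGL F}) K) fun p => span F {pairVec lam p} := by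
  refine permutes_wreath (fun i h hh p => ?_) (fun π hπ p => ?_)
  · rcases mem_closure_negGL hh with rfl | rfl
    · rw [blockGL_one]
      exact ⟨p, by rw [Units.val_one, Module.End.one_eq_id, map_id]⟩
    · obtain ⟨q, c, hc, hq⟩ := blockGL_negGL_pairVec lam i p
      exact map_span_singleton_mem_range _ hc hq
  · obtain ⟨q, c, hc, hq⟩ := permGL_pairVec hlam (hK π hπ) p
    exact map_span_singleton_mem_range _ hc hq

end SignedPairs

/-- Let `n = 2m` be even, `λ ∈ F` with `λ² = −1`, `char F ≠ 2`, `H = {±1} ≤ GL₁(F)` and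
`K ≤ S_n` transitive preserving the partition `{{1,2},…,{n−1,n}}`.  Then
`F^n = ⟨e₁+λe₂⟩ ⊕ ⟨e₁−λe₂⟩ ⊕ ⋯ ⊕ ⟨e_{n−1}+λe_n⟩ ⊕ ⟨e_{n−1}−λe_n⟩` is a system of
imprimitivity for `G = H ≀ K`. -/
theorem soi_for_sign_wreath_sqrt_neg_one (F : Type*) [Field F] (hchar : (2 : F) ≠ 0)
    (lam : F) (hlam : lam ^ 2 = -1)
    (m : ℕ) (K : Subgroup (Equiv.Perm (Fin (2 * m))))
    (hKpart : ∀ π ∈ K, ∀ t : Fin m, ∃ t' : Fin m,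
      ({π ⟨2 * t.val, by omega⟩, π ⟨2 * t.val + 1, by omega⟩} : Set (Fin (2 * m))) =
        {⟨2 * t'.val, by omega⟩, ⟨2 * t'.val + 1, by omega⟩}) :
    IsSystemOfImprimitivity F (wreath F (Subgroup.closure {negGL F}) K)
      (fun p : Fin m × Bool =>
        Submodule.span F {stdVec F (2 * m) ⟨2 * p.1.val, by omega⟩ +
          (if p.2 then -lam else lam) • stdVec F (2 * m) ⟨2 * p.1.val + 1, by omega⟩}) :=
  isSystemOfImprimitivity_span_singleton (v := pairVec lam) (span_range_pairVec hchar hlam)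
    (by simp [Module.finrank_fintype_fun_eq_card, mul_comm])
    (permutes_signWreath_pairVec hlam hKpart)
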